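/- arXiv:2306.09721 — 6 statements merged into one kernel-verified Lean document; each statement's English description precedes it below -/
import Mathlib

section
/- Let A be a category with finite products and Σ a class of morphisms of A containing all identities and closed under binary products (if f, g ∈ Σ then f × g ∈ Σ). Then the localization A[Σ⁻¹] has finite products and the localization functor Q : A → A[Σ⁻¹] preserves finite products. -/
open CategoryTheory CategoryTheory.Limits

universe v u

/-!
Replacing `W` by its closure under isomorphisms does not change the localization, and the closure
is still stable under binary products. Containing the identities, it contains all isomorphisms, so
induction on a finite index type, via `∏ᶜ X ≅ X none ⨯ ∏ᶜ (X ∘ some)` for `X : Option J → C`,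
makes it stable under all finite products; localizing at such a class creates and preserves
finite products.
-/

namespace CategoryTheory

variable {C : Type*} [Category* C]

namespace Limits

lemma Pi.reindex_hom_naturality {α β : Type} (e : α ≃ β) {X₁ X₂ : β → C}
    [HasProduct X₁] [HasProduct X₂] [HasProduct (X₁ ∘ e)] [HasProduct (X₂ ∘ e)]
    (f : ∀ b, X₁ b ⟶ X₂ b) :
    Pi.map (f := X₁ ∘ e) (g := X₂ ∘ e) (fun a => f (e a)) ≫ (Pi.reindex e X₂).hom =
      (Pi.reindex e X₁).hom ≫ Pi.map f := by
  ext b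
  obtain ⟨a, rfl⟩ := e.surjective b
  simp

variable [HasFiniteProducts C]

noncomputable def piOptionIso {J : Type} [Finite J] (X : Option J → C) :
    ∏ᶜ X ≅ X none ⨯ ∏ᶜ fun j => X (some j) where
  hom := prod.lift (Pi.π X none) (Pi.lift fun j => Pi.π X (some j))
  inv := Pi.lift fun o => Option.casesOn o prod.fst fun j => prod.snd ≫ Pi.π _ j
  hom_inv_id := by
    ext (_ | j) <;> simp [prod.lift_fst, prod.lift_snd_assoc]
  inv_hom_id := by
    ext j <;> simp [prod.lift_fst, prod.lift_snd_assoc]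

lemma piOptionIso_hom_naturality {J : Type} [Finite J] {X₁ X₂ : Option J → C}
    (f : ∀ o, X₁ o ⟶ X₂ o) :
    Pi.map f ≫ (piOptionIso X₂).hom =
      (piOptionIso X₁).hom ≫ prod.map (f none) (Pi.map fun j => f (some j)) := by
  ext j <;> simp [piOptionIso, prod.lift_fst, prod.lift_snd_assoc]

end Limits

namespace MorphismProperty

instance isoClosure_containsIdentities (W : MorphismProperty C) [W.ContainsIdentities] :
    W.isoClosure.ContainsIdentities :=
  ⟨fun X => W.le_isoClosure _ (W.id_mem X)⟩

lemma isoClosure_prod_map [HasBinaryProducts C] {W : MorphismProperty C}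
    (hW : ∀ {X₁ Y₁ X₂ Y₂ : C} (f : X₁ ⟶ Y₁) (g : X₂ ⟶ Y₂), W f → W g → W (prod.map f g))
    {X₁ Y₁ X₂ Y₂ : C} {f : X₁ ⟶ Y₁} {g : X₂ ⟶ Y₂} (hf : W.isoClosure f) (hg : W.isoClosure g) :
    W.isoClosure (prod.map f g) := by
  obtain ⟨_, _, f', hf', ⟨ef⟩⟩ := hf
  obtain ⟨_, _, g', hg', ⟨eg⟩⟩ := hg
  refine ⟨_, _, prod.map f' g', hW _ _ hf' hg',
    ⟨CategoryTheory.Arrow.isoMk (prod.mapIso (Comma.leftIso ef) (Comma.leftIso eg))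
      (prod.mapIso (Comma.rightIso ef) (Comma.rightIso eg)) ?_⟩⟩
  apply prod.hom_ext <;>
    simp only [CategoryTheory.Arrow.mk_left, CategoryTheory.Arrow.mk_right, prod.mapIso_hom,
      CategoryTheory.Arrow.mk_hom, prod.map_map, prod.map_fst, prod.map_snd]
  exacts [_ ≫= ef.hom.w, _ ≫= eg.hom.w]

lemma pi_map_of_prod_map [HasFiniteProducts C] (P : MorphismProperty C) [P.RespectsIso]
    [P.ContainsIdentities]
    (hP : ∀ {X₁ Y₁ X₂ Y₂ : C} (f : X₁ ⟶ Y₁) (g : X₂ ⟶ Y₂), P f → P g → P (prod.map f g))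
    {J : Type} [Finite J] {X₁ X₂ : J → C} (f : ∀ j, X₁ j ⟶ X₂ j) (hf : ∀ j, P (f j)) :
    P (Limits.Pi.map f) := by
  revert X₁ X₂
  refine Finite.induction_empty_option (P := fun J => ∀ [Finite J] {X₁ X₂ : J → C}
    (f : ∀ j, X₁ j ⟶ X₂ j), (∀ j, P (f j)) → P (Limits.Pi.map f)) ?_ ?_ ?_ J
  · intro α β e ih _ X₁ X₂ f hf
    have : Finite α := .of_equiv _ e.symm
    exact (P.arrow_mk_iso_iff (CategoryTheory.Arrow.isoMk (Pi.reindex e X₁) (Pi.reindex e X₂)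
      (Pi.reindex_hom_naturality e f).symm)).1 (ih (fun a => f (e a)) fun a => hf (e a))
  · intro _ X₁ X₂ f _
    have : ∀ j, IsIso (f j) := fun j => j.elim
    exact P.of_isIso _
  · intro α _ ih _ X₁ X₂ f hf
    exact (P.arrow_mk_iso_iff (CategoryTheory.Arrow.isoMk (piOptionIso X₁) (piOptionIso X₂)
      (piOptionIso_hom_naturality f).symm)).2
      (hP _ _ (hf none) (ih (fun j => f (some j)) fun j => hf (some j)))

lemma isStableUnderFiniteProducts_of_prod_map [HasFiniteProducts C] (P : MorphismProperty C)
    [P.RespectsIso] [P.ContainsIdentities]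
    (hP : ∀ {X₁ Y₁ X₂ Y₂ : C} (f : X₁ ⟶ Y₁) (g : X₂ ⟶ Y₂), P f → P g → P (prod.map f g)) :
    P.IsStableUnderFiniteProducts :=
  ⟨fun J _ => .mk _ J fun _ _ _ _ f hf => P.pi_map_of_prod_map hP f hf⟩

end MorphismProperty

lemma Functor.IsLocalization.isoClosure {D : Type*} [Category* D] (L : C ⥤ D)
    (W : MorphismProperty C) [L.IsLocalization W] : L.IsLocalization W.isoClosure :=
  of_equivalence_source L W L W.isoClosure .refl
    (W.le_isoClosure.trans W.isoClosure.le_isoClosure)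
    ((MorphismProperty.IsInvertedBy.isoClosure_iff W L).2 (Localization.inverts L W))
    L.leftUnitor

end CategoryTheory

/-- Let `A` be a category with finite products and `W` a class of morphisms containing all
identities and closed under binary products. Then the category of fractions `A[W⁻¹]` has
finite products and the localization functor `Q : A ⥤ A[W⁻¹]` preserves them. -/
theorem stmt2 {A : Type u} [Category.{v} A] [HasFiniteProducts A]
    (W : MorphismProperty A)
    (hid : ∀ X : A, W (𝟙 X))
    (hprod : ∀ {X Y Z T : A} (f : X ⟶ Y) (g : Z ⟶ T), W f → W g →
      W (Limits.prod.map f g)) :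
    HasFiniteProducts W.Localization ∧ PreservesFiniteProducts W.Q := by
  have : W.ContainsIdentities := ⟨hid⟩
  have := Functor.IsLocalization.isoClosure W.Q W
  have := W.isoClosure.isStableUnderFiniteProducts_of_prod_map
    fun f g hf hg => MorphismProperty.isoClosure_prod_map hprod hf hg
  exact ⟨Localization.hasFiniteProducts W.Q W.isoClosure,
    Localization.preservesFiniteProducts W.Q W.isoClosure⟩
end

section
/- Let ∂ : E₂ → E₁ be a crossed module with associated homomorphisms d(x,g) = ∂x + g and c(x,g) = g from E₂ ⋊ E₁ to E₁. Then the images of the maps ker(d) ↪ E₂ ⋊ E₁ and ker(c) ↪ E₂ ⋊ E₁ commute elementwise in E₂ ⋊ E₁. -/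
/-- For a crossed module `δ : E₂ →* E₁`, with `d (x, g) = δ x * g` and `c (x, g) = g`
defined on `E₂ ⋊[a] E₁`, the elements of `ker d` commute with the elements of `ker c`. -/
theorem stmt6 {E₂ E₁ : Type*} [Group E₂] [Group E₁]
    (δ : E₂ →* E₁) (a : E₁ →* MulAut E₂)
    (equiv : ∀ (g : E₁) (x : E₂), δ (a g x) = g * δ x * g⁻¹)
    (peiffer : ∀ x₁ x₂ : E₂, a (δ x₁) x₂ = x₁ * x₂ * x₁⁻¹) :
    ∀ p q : E₂ ⋊[a] E₁, δ p.left * p.right = 1 → q.right = 1 → p * q = q * p := by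
  rintro ⟨x, g⟩ ⟨y, h⟩ hp hq
  simp only at hp hq
  subst hq
  have hg : g = (δ x)⁻¹ := eq_inv_of_mul_eq_one_right hp
  subst hg
  ext <;> simp only [SemidirectProduct.mul_left, SemidirectProduct.mul_right, mul_one, one_mul,
    map_one, MulAut.one_apply]
  have : a (δ x)⁻¹ y = x⁻¹ * y * x := by
    have h := peiffer x⁻¹ y
    rwa [map_inv, inv_inv] at h
  rw [this]
  group
end

section
/- Let ∂ : E₂ → E₁ be a crossed module and let d, c : E₂ ⋊ E₁ → E₁ be given by d(x,g) = ∂x + g, c(x,g) = g. Then the map φ : E₂ × E₂ → E₂ ⋊ E₁ defined by φ(x₁, x₂) = (−x₁ + (∂x₁) ∗ x₂, ∂x₁) is a group homomorphism, and it satisfies φ(x,0) = (−x, ∂x) and φ(0, x) = (x, 0). -/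
/-- For a crossed module `δ : E₂ →* E₁`, the map
`φ (x₁, x₂) = (x₁⁻¹ * (δ x₁) ∗ x₂, δ x₁) : E₂ × E₂ → E₂ ⋊[a] E₁` is a group homomorphism
(the cooperator of the kernel inclusions of `d` and `c`), with `φ (x, 1) = (x⁻¹, δ x)`
and `φ (1, x) = (x, 1)`. -/
theorem stmt7 {E₂ E₁ : Type*} [Group E₂] [Group E₁]
    (δ : E₂ →* E₁) (a : E₁ →* MulAut E₂)
    (equiv : ∀ (g : E₁) (x : E₂), δ (a g x) = g * δ x * g⁻¹)
    (peiffer : ∀ x₁ x₂ : E₂, a (δ x₁) x₂ = x₁ * x₂ * x₁⁻¹)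
    (φ : E₂ × E₂ → E₂ ⋊[a] E₁)
    (hφ : ∀ x₁ x₂ : E₂, φ (x₁, x₂) = ⟨x₁⁻¹ * a (δ x₁) x₂, δ x₁⟩) :
    (∀ u v : E₂ × E₂, φ (u * v) = φ u * φ v) ∧
    (∀ x : E₂, φ (x, 1) = ⟨x⁻¹, δ x⟩) ∧
    (∀ x : E₂, φ (1, x) = ⟨x, 1⟩) := by
  refine ⟨?_, ?_, ?_⟩
  · rintro ⟨x₁, x₂⟩ ⟨y₁, y₂⟩
    show φ (x₁ * y₁, x₂ * y₂) = φ (x₁, x₂) * φ (y₁, y₂)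
    ext
    · simp [hφ, SemidirectProduct.mul_left, peiffer]
      group
    · simp [hφ, SemidirectProduct.mul_right]
  · intro x
    ext <;> simp [hφ, peiffer]
  · intro x
    ext <;> simp [hφ, peiffer]
end

section
/- In a butterfly between crossed extensions, the homomorphism κ♯ι : E₂ × E₂' → F defined by (x, x') ↦ κ(x) + ι(x') is a group homomorphism, and the square δ ∘ (κ♯ι) = ∂ ∘ pr₁ is a pullback square of groups. -/
/-- In a butterfly between crossed extensions, the map `κ♯ι : E₂ × E₂' → F`,
`(x, x') ↦ κ x * ι x'`, is a group homomorphism, and the commuting square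
`δ ∘ (κ♯ι) = ∂ ∘ pr₁` is a pullback of groups: the induced map
`E₂ × E₂' → {(f, x) : F × E₂ | δ f = ∂ x}`, `(x, x') ↦ (κ x * ι x', x)`, is bijective. -/
theorem stmt10 {E₂ E₂' E₁ F : Type*} [Group E₂] [Group E₂'] [Group E₁] [Group F]
    (bd : E₂ →* E₁)                         -- the crossed module ∂ of the first extension
    (κ : E₂ →* F) (ι : E₂' →* F) (δ : F →* E₁)
    (hδκ : ∀ x : E₂, δ (κ x) = bd x)        -- δ ∘ κ = ∂
    (hι_inj : Function.Injective ι)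
    (hιker : ι.range = δ.ker)               -- (ι, δ) exact: ι is a kernel of δ
    (hδ_surj : Function.Surjective δ)       -- (ι, δ) short exact
    (hcomm : ∀ (x : E₂) (x' : E₂'), κ x * ι x' = ι x' * κ x) :  -- the wings commute
    (∀ u v : E₂ × E₂', κ (u * v).1 * ι (u * v).2 = (κ u.1 * ι u.2) * (κ v.1 * ι v.2)) ∧
    Function.Bijective
      (fun u : E₂ × E₂' =>
        (⟨(κ u.1 * ι u.2, u.1), by
          have h1 : ι u.2 ∈ δ.ker := hιker ▸ ⟨u.2, rfl⟩
          simp [map_mul, hδκ, MonoidHom.mem_ker.mp h1]⟩ :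
          {p : F × E₂ // δ p.1 = bd p.2})) := by
  refine ⟨fun u v => ?_, fun u v huv => ?_, fun ⟨⟨f, x⟩, hf⟩ => ?_⟩
  · simp only [Prod.fst_mul, Prod.snd_mul, map_mul]
    rw [mul_assoc, mul_assoc, ← mul_assoc (κ v.1), hcomm v.1 u.2, mul_assoc]
  · have h := congrArg (fun z => z.1.2) huv
    have h1 : u.1 = v.1 := h
    have h2 := congrArg (fun z => z.1.1) huv
    simp only [h1] at h2
    have h3 : ι u.2 = ι v.2 := mul_left_cancel h2
    exact Prod.ext h1 (hι_inj h3)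
  · have hk : (κ x)⁻¹ * f ∈ δ.ker := by
      simp [MonoidHom.mem_ker, hδκ, hf]
    obtain ⟨x', hx'⟩ := hιker ▸ hk
    refine ⟨(x, x'), ?_⟩
    refine Subtype.ext (Prod.ext ?_ rfl)
    show κ x * ι x' = f
    rw [hx', mul_inv_cancel_left]
end

section
/- Let a butterfly be given between two crossed extensions of C with kernels B and B', with structure maps κ, ι, δ, γ and kernel inclusions j : B → E₂, j' : B' → E₂'. Then there exists a unique group homomorphism β : B → B' such that κ(j(b)) = ι(j'(−β(b))) for all b ∈ B, i.e. κ ∘ j = ι ∘ j' ∘ (−β). -/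
/-- Given a butterfly between two crossed extensions of `C` with kernels `B` and `B'`,
there is a unique group homomorphism `β : B →* B'` with `κ ∘ j = ι ∘ j' ∘ (-β)`,
i.e. `κ (j b) = ι (j' (β b)⁻¹)` for all `b`. -/
theorem stmt11 {B B' E₂ E₂' E₁ E₁' C F : Type*}
    [CommGroup B] [CommGroup B'] [Group E₂] [Group E₂'] [Group E₁] [Group E₁']
    [Group C] [Group F]
    -- the two crossed extensions
    (j : B →* E₂) (bd : E₂ →* E₁) (p : E₁ →* C)
    (j' : B' →* E₂') (bd' : E₂' →* E₁') (p' : E₁' →* C)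
    (hj_inj : Function.Injective j) (hj_ker : j.range = bd.ker)
    (hp_surj : Function.Surjective p) (hp_ker : p.ker = bd.range)
    (hj'_inj : Function.Injective j') (hj'_ker : j'.range = bd'.ker)
    (hp'_surj : Function.Surjective p') (hp'_ker : p'.ker = bd'.range)
    -- the butterfly data
    (κ : E₂ →* F) (ι : E₂' →* F) (δ : F →* E₁) (γ : F →* E₁')
    (hδκ : ∀ x, δ (κ x) = bd x) (hγι : ∀ x', γ (ι x') = bd' x')
    (hpδ : ∀ f, p (δ f) = p' (γ f))
    (hγκ : ∀ x, γ (κ x) = 1)                     -- (κ, γ) is a complex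
    (hι_inj : Function.Injective ι) (hιker : ι.range = δ.ker)
    (hδ_surj : Function.Surjective δ) :          -- (ι, δ) is short exact
    ∃! β : B →* B', ∀ b : B, κ (j b) = ι (j' (β b)⁻¹) := by
  have hinj : Function.Injective (fun b' : B' => ι (j' b')) :=
    fun x y h => hj'_inj (hι_inj h)
  have key : ∀ b : B, ∃ b' : B', κ (j b) = ι (j' b'⁻¹) := by
    intro b
    have h1 : δ (κ (j b)) = 1 := by
      rw [hδκ]
      have : j b ∈ bd.ker := hj_ker ▸ ⟨b, rfl⟩
      exact this
    have h2 : κ (j b) ∈ ι.range := by rw [hιker]; exact h1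
    obtain ⟨x', hx'⟩ := h2
    have h3 : bd' x' = 1 := by rw [← hγι, hx', hγκ]
    have h4 : x' ∈ j'.range := by rw [hj'_ker]; exact h3
    obtain ⟨b', hb'⟩ := h4
    exact ⟨b'⁻¹, by rw [inv_inv, hb', hx']⟩
  choose f hf using key
  have hmul : ∀ a b, f (a * b) = f a * f b := by
    intro a b
    have h : ι (j' (f (a * b))⁻¹) = ι (j' (f a * f b)⁻¹) := by
      rw [← hf, map_mul j, map_mul κ, hf, hf, ← map_mul, ← map_mul, mul_inv,
        mul_comm (f a)⁻¹]
    exact inv_injective (hinj h)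
  refine ⟨MonoidHom.mk' f hmul, hf, ?_⟩
  intro β hβ
  ext b
  exact hinj (by simpa using (hβ b).symm.trans (hf b))
end

section
/- Let 0 → B →j→ E₂ →∂→ E₁ →p→ C → 0 be a crossed extension and β : B → B' a morphism of C-modules (B' abelian with compatible C-action). Form the pushforward group B' ×^B E₂ := (B' × E₂)/{(β(b), j(b)⁻¹) : b ∈ B}, the quotient by this central subgroup. Then there is an induced crossed module ∂' : B' ×^B E₂ → E₁ with ∂'[(b', x)] = ∂x, the map b' ↦ [(b', 0)] is an injective homomorphism B' → B' ×^B E₂ identifying B' with ker ∂', and 0 → B' → B' ×^B E₂ →∂'→ E₁ →p→ C → 0 is a crossed extension whose induced C-module structure on B' is the given one. -/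
variable {B B' E₂ E₁ C : Type*} [CommGroup B] [CommGroup B']
  [Group E₂] [Group E₁] [Group C]

/-- The central subgroup `{(β b, (j b)⁻¹) | b ∈ B}` of `B' × E₂` (as a normal closure),
by which one quotients to form the pushforward `B' ×^B E₂`. -/
def MM (β : B →* B') (j : B →* E₂) : Subgroup (B' × E₂) :=
  Subgroup.normalClosure {x : B' × E₂ | ∃ b : B, x = (β b, (j b)⁻¹)}

instance MM_normal (β : B →* B') (j : B →* E₂) : (MM β j).Normal :=
  Subgroup.normalClosure_normal

/-- The homomorphism `b ↦ (β b, (j b)⁻¹)`. -/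
def Mhom (β : B →* B') (j : B →* E₂) : B →* B' × E₂ where
  toFun b := (β b, (j b)⁻¹)
  map_one' := by simp
  map_mul' b₁ b₂ := by
    ext
    · simp
    · show (j (b₁ * b₂))⁻¹ = (j b₁)⁻¹ * (j b₂)⁻¹
      rw [mul_comm b₁ b₂, map_mul, mul_inv_rev]

theorem Mhom_range_normal (β : B →* B') (j : B →* E₂)
    (hj_central : ∀ (x : E₂) (b : B), x * j b = j b * x) :
    (Mhom β j).range.Normal := by
  constructor
  rintro _ ⟨b, rfl⟩ g
  refine ⟨b, ?_⟩
  have hc : Commute g.2 (j b) := hj_central g.2 b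
  ext
  · show β b = g.1 * β b * g.1⁻¹
    rw [mul_comm g.1, mul_assoc, mul_inv_cancel, mul_one]
  · show (j b)⁻¹ = g.2 * (j b)⁻¹ * g.2⁻¹
    rw [hc.inv_right.eq, mul_assoc, mul_inv_cancel, mul_one]

theorem MM_eq (β : B →* B') (j : B →* E₂)
    (hj_central : ∀ (x : E₂) (b : B), x * j b = j b * x) :
    MM β j = (Mhom β j).range := by
  haveI := Mhom_range_normal β j hj_central
  apply le_antisymm
  · exact Subgroup.normalClosure_le_normal (by rintro x ⟨b, rfl⟩; exact ⟨b, rfl⟩)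
  · rintro _ ⟨b, rfl⟩
    exact Subgroup.subset_normalClosure ⟨b, rfl⟩

/-- Push forward of a crossed extension `0 → B →j→ E₂ →δ→ E₁ →p→ C → 0` along a
`C`-module morphism `β : B → B'`: on the quotient `B' ×^B E₂ = (B' × E₂)⧸{(β b, (j b)⁻¹)}`
there are an induced crossed module `δ' [(b', x)] = δ x` and `E₁`-action
`g ∗ [(b', x)] = [(ξ' (p g) b', g ∗ x)]`, the map `b' ↦ [(b', 1)]` is an injective central
homomorphism identifying `B'` with `ker δ'`, `p` is still a cokernel of `δ'`, and the
induced `C`-module structure on `B'` is the given one. -/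
theorem stmt16 (j : B →* E₂) (δ : E₂ →* E₁) (p : E₁ →* C)
    (a : E₁ →* MulAut E₂)
    (equiv : ∀ (g : E₁) (x : E₂), δ (a g x) = g * δ x * g⁻¹)
    (peiffer : ∀ x₁ x₂ : E₂, a (δ x₁) x₂ = x₁ * x₂ * x₁⁻¹)
    (hj_inj : Function.Injective j) (hj_ker : j.range = δ.ker)
    (hj_central : ∀ (x : E₂) (b : B), x * j b = j b * x)
    (hp_surj : Function.Surjective p) (hp_ker : p.ker = δ.range)
    (ξ : C →* MulAut B) (hξ : ∀ (g : E₁) (b : B), j (ξ (p g) b) = a g (j b))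
    (ξ' : C →* MulAut B') (β : B →* B')
    (hβ_equiv : ∀ (c : C) (b : B), β (ξ c b) = ξ' c (β b)) :
    ∃ δ' : ((B' × E₂) ⧸ MM β j) →* E₁,
      (∀ (b' : B') (x : E₂), δ' (QuotientGroup.mk (b', x)) = δ x) ∧
      ∃ a' : E₁ →* MulAut ((B' × E₂) ⧸ MM β j),
        (∀ (g : E₁) (b' : B') (x : E₂),
          a' g (QuotientGroup.mk (b', x)) = QuotientGroup.mk (ξ' (p g) b', a g x)) ∧
        (∀ (g : E₁) (q : (B' × E₂) ⧸ MM β j), δ' (a' g q) = g * δ' q * g⁻¹) ∧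
        (∀ q₁ q₂ : (B' × E₂) ⧸ MM β j, a' (δ' q₁) q₂ = q₁ * q₂ * q₁⁻¹) ∧
        Function.Injective
          (fun b' : B' => (QuotientGroup.mk (b', (1 : E₂)) : (B' × E₂) ⧸ MM β j)) ∧
        (∀ (q : (B' × E₂) ⧸ MM β j) (b' : B'),
          q * QuotientGroup.mk (b', (1 : E₂)) = QuotientGroup.mk (b', (1 : E₂)) * q) ∧
        (∀ q : (B' × E₂) ⧸ MM β j,
          δ' q = 1 ↔ ∃ b' : B', q = QuotientGroup.mk (b', (1 : E₂))) ∧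
        (∀ g : E₁, p g = 1 ↔ g ∈ δ'.range) ∧
        (∀ (g : E₁) (b' : B'),
          a' g (QuotientGroup.mk (b', (1 : E₂))) =
            QuotientGroup.mk (ξ' (p g) b', (1 : E₂))) := by
  have hMM : MM β j = (Mhom β j).range := MM_eq β j hj_central
  have hmem : ∀ z : B' × E₂, z ∈ MM β j ↔ ∃ b : B, z = (β b, (j b)⁻¹) := by
    intro z
    rw [hMM]
    constructor
    · rintro ⟨b, rfl⟩; exact ⟨b, rfl⟩
    · rintro ⟨b, rfl⟩; exact ⟨b, rfl⟩
  -- the induced map δ'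
  have hδ₀ : ∀ z ∈ MM β j, (δ.comp (MonoidHom.snd B' E₂)) z = 1 := by
    intro z hz
    obtain ⟨b, rfl⟩ := (hmem z).mp hz
    have hb : δ (j b) = 1 := by
      have : j b ∈ δ.ker := by rw [← hj_ker]; exact ⟨b, rfl⟩
      exact this
    show δ (j b)⁻¹ = 1
    rw [map_inv, hb, inv_one]
  refine ⟨QuotientGroup.lift (MM β j) (δ.comp (MonoidHom.snd B' E₂)) hδ₀,
    fun b' x => rfl, ?_⟩
  -- the automorphisms of B' × E₂
  set φ : E₁ → ((B' × E₂) ≃* (B' × E₂)) :=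
    fun g => MulEquiv.prodCongr (ξ' (p g)) (a g) with hφ
  have hφ_apply : ∀ (g : E₁) (z : B' × E₂), φ g z = (ξ' (p g) z.1, a g z.2) :=
    fun g z => rfl
  have hφmap : ∀ g : E₁,
      Subgroup.map ((φ g : (B' × E₂) →* (B' × E₂))) (MM β j) = MM β j := by
    intro g
    rw [hMM]
    apply le_antisymm
    · rintro _ ⟨_, ⟨b, rfl⟩, rfl⟩
      refine ⟨ξ (p g) b, ?_⟩
      show (β (ξ (p g) b), (j (ξ (p g) b))⁻¹) = φ g (β b, (j b)⁻¹)
      rw [hφ_apply]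
      ext
      · exact hβ_equiv (p g) b
      · show (j (ξ (p g) b))⁻¹ = a g (j b)⁻¹
        rw [map_inv, hξ]
    · rintro _ ⟨b, rfl⟩
      refine ⟨Mhom β j ((ξ (p g))⁻¹ b), ⟨_, rfl⟩, ?_⟩
      show φ g (β ((ξ (p g))⁻¹ b), (j ((ξ (p g))⁻¹ b))⁻¹) = (β b, (j b)⁻¹)
      rw [hφ_apply]
      ext
      · show ξ' (p g) (β ((ξ (p g))⁻¹ b)) = β b
        rw [← hβ_equiv, MulAut.apply_inv_self]
      · show a g (j ((ξ (p g))⁻¹ b))⁻¹ = (j b)⁻¹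
        rw [map_inv, ← hξ, MulAut.apply_inv_self]
  -- the induced action a'
  refine ⟨{ toFun := fun g => QuotientGroup.congr (MM β j) (MM β j) (φ g) (hφmap g),
            map_one' := ?_,
            map_mul' := ?_ }, ?_, ?_, ?_, ?_, ?_, ?_, ?_, ?_⟩
  · apply MulEquiv.ext
    intro q
    obtain ⟨z, rfl⟩ := QuotientGroup.mk_surjective q
    show (QuotientGroup.mk (φ 1 z) : (B' × E₂) ⧸ MM β j) = QuotientGroup.mk z
    have h1 : φ (1 : E₁) z = z := by
      ext <;> simp [hφ_apply]
    rw [h1]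
  · intro g₁ g₂
    apply MulEquiv.ext
    intro q
    obtain ⟨z, rfl⟩ := QuotientGroup.mk_surjective q
    show (QuotientGroup.mk (φ (g₁ * g₂) z) : (B' × E₂) ⧸ MM β j)
      = QuotientGroup.mk (φ g₁ (φ g₂ z))
    have h1 : φ (g₁ * g₂) z = φ g₁ (φ g₂ z) := by
      ext <;> simp [hφ_apply]
    rw [h1]
  -- a' on representatives
  · intro g b' x
    rfl
  -- equivariance of δ'
  · intro g q
    obtain ⟨⟨b', x⟩, rfl⟩ := QuotientGroup.mk_surjective q
    show δ (a g x) = g * δ x * g⁻¹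
    exact equiv g x
  -- Peiffer identity
  · intro q₁ q₂
    obtain ⟨⟨b₁, x₁⟩, rfl⟩ := QuotientGroup.mk_surjective q₁
    obtain ⟨⟨b₂, x₂⟩, rfl⟩ := QuotientGroup.mk_surjective q₂
    have hp1 : p (δ x₁) = 1 := by
      have : δ x₁ ∈ p.ker := by rw [hp_ker]; exact ⟨x₁, rfl⟩
      exact this
    show (QuotientGroup.mk (ξ' (p (δ x₁)) b₂, a (δ x₁) x₂) : (B' × E₂) ⧸ MM β j)
      = QuotientGroup.mk (b₁, x₁) * QuotientGroup.mk (b₂, x₂)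
        * (QuotientGroup.mk (b₁, x₁))⁻¹
    rw [← QuotientGroup.mk_inv, ← QuotientGroup.mk_mul, ← QuotientGroup.mk_mul]
    congr 1
    ext
    · show ξ' (p (δ x₁)) b₂ = b₁ * b₂ * b₁⁻¹
      rw [hp1, map_one, MulAut.one_apply, mul_comm b₁ b₂, mul_inv_cancel_right]
    · show a (δ x₁) x₂ = x₁ * x₂ * x₁⁻¹
      exact peiffer x₁ x₂
  -- injectivity of b' ↦ [(b',1)]
  · intro b₁ b₂ h
    rw [QuotientGroup.eq] at h
    obtain ⟨b, hb⟩ := (hmem _).mp h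
    have h2 : (j b)⁻¹ = (1 : E₂) := by
      have := congrArg Prod.snd hb
      simpa using this.symm
    have hb1 : b = 1 := hj_inj (by rw [map_one]; exact inv_eq_one.mp h2)
    have h1 := congrArg Prod.fst hb
    simp only [Prod.fst_mul, Prod.fst_inv, hb1, map_one] at h1
    have : b₁⁻¹ * b₂ = 1 := h1
    exact (inv_mul_eq_one.mp this)
  -- centrality of B'
  · intro q b'
    obtain ⟨⟨c, x⟩, rfl⟩ := QuotientGroup.mk_surjective q
    rw [← QuotientGroup.mk_mul, ← QuotientGroup.mk_mul]
    congr 1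
    ext
    · exact mul_comm c b'
    · show x * 1 = 1 * x
      rw [mul_one, one_mul]
  -- kernel of δ'
  · intro q
    obtain ⟨⟨c, x⟩, rfl⟩ := QuotientGroup.mk_surjective q
    constructor
    · intro h
      have hx : x ∈ j.range := by rw [hj_ker]; exact h
      obtain ⟨b, rfl⟩ := hx
      refine ⟨c * β b, ?_⟩
      rw [QuotientGroup.eq]
      refine (hmem _).mpr ⟨b, ?_⟩
      ext
      · show c⁻¹ * (c * β b) = β b
        rw [inv_mul_cancel_left]
      · show (j b)⁻¹ * 1 = (j b)⁻¹
        rw [mul_one]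
    · rintro ⟨b', hb'⟩
      rw [QuotientGroup.eq] at hb'
      obtain ⟨b, hb⟩ := (hmem _).mp hb'
      have h2 : x⁻¹ = (j b)⁻¹ := by
        have := congrArg Prod.snd hb
        simpa using this
      have hx : x = j b := by rw [← inv_inj, h2]
      show δ x = 1
      rw [hx]
      have : j b ∈ δ.ker := by rw [← hj_ker]; exact ⟨b, rfl⟩
      exact this
  -- cokernel
  · intro g
    rw [← MonoidHom.mem_ker, hp_ker]
    constructor
    · rintro ⟨x, rfl⟩
      exact ⟨QuotientGroup.mk (1, x), rfl⟩
    · rintro ⟨q, rfl⟩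
      obtain ⟨⟨c, x⟩, rfl⟩ := QuotientGroup.mk_surjective q
      exact ⟨x, rfl⟩
  -- the induced action on B'
  · intro g b'
    show (QuotientGroup.mk (ξ' (p g) b', a g 1) : (B' × E₂) ⧸ MM β j)
      = QuotientGroup.mk (ξ' (p g) b', 1)
    rw [map_one]
end
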